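/- arXiv:1905.10068 — 2 statements merged into one kernel-verified Lean document; each statement's English description precedes it below -/
import Mathlib

section
/- Let B = 𝔽_3[x,y] be the polynomial ring in two variables over the field with three elements, and let φ : B → B[t] be the 𝔽_3-algebra homomorphism determined by φ(x) = x + t³ and φ(y) = y + t. Then: (1) for every g ∈ B the constant coefficient of φ(g) is g, so the coefficient maps D_ℓ form a higher 𝔽_3-derivation D with φ_D = φ; (2) φ(x − y³) = x − y³, so x − y³ ∈ B^D; (3) D is locally finite and iterative; (4) D_1 = Δ_{x−y³} = ∂_y (since 3 = 0 in 𝔽_3) and 2!·D_2 = D_1 ∘ D_1. Hence D is an lfihd on B of Jacobian type determined by x − y³. -/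
open MvPolynomial

/-- A higher `R`-derivation on `B`: a family of `R`-linear maps `D ℓ : B → B`
with `D 0 = id` and the Leibniz rule `D ℓ (a*b) = ∑_{i+j=ℓ} D i a * D j b`. -/
structure HigherDerivation (R B : Type*) [CommRing R] [CommRing B] [Algebra R B] where
  D : ℕ → B →ₗ[R] B
  D_zero : D 0 = LinearMap.id
  leibniz : ∀ (ℓ : ℕ) (a b : B),
    D ℓ (a * b) = ∑ ij ∈ Finset.HasAntidiagonal.antidiagonal ℓ, D ij.1 a * D ij.2 b

namespace HigherDerivation

variable {R B : Type*} [CommRing R] [CommRing B] [Algebra R B]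

/-- The kernel `B^D = ⋂_{ℓ ≥ 1} ker D_ℓ` of a higher derivation. -/
def kerSet (hd : HigherDerivation R B) : Set B :=
  {b | ∀ ℓ : ℕ, 1 ≤ ℓ → hd.D ℓ b = 0}

/-- `D` is locally finite. -/
def LocallyFinite (hd : HigherDerivation R B) : Prop :=
  ∀ b : B, ∃ N : ℕ, ∀ ℓ : ℕ, N ≤ ℓ → hd.D ℓ b = 0

/-- `D` is iterative: `D_i ∘ D_j = binom(i+j, j) • D_{i+j}`. -/
def Iterative (hd : HigherDerivation R B) : Prop :=
  ∀ (i j : ℕ) (b : B), hd.D i (hd.D j b) = (i + j).choose j • hd.D (i + j) b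

/-- `s` is a slice of `D`: the `t`-degree `N ≥ 1` of `φ_D(s)` is minimal among the
`t`-degrees of `φ_D(b)` for `b ∉ B^D`, and the leading `t`-coefficient `D N s` of
`φ_D(s)` is a unit of `B` (in particular `s ∉ B^D`). -/
def IsSlice (hd : HigherDerivation R B) (s : B) : Prop :=
  ∃ N : ℕ, 1 ≤ N ∧ hd.D N s ≠ 0 ∧ (∀ ℓ : ℕ, N < ℓ → hd.D ℓ s = 0) ∧
    IsUnit (hd.D N s) ∧ ∀ b : B, b ∉ hd.kerSet → ∃ m : ℕ, N ≤ m ∧ hd.D m b ≠ 0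

end HigherDerivation
/-- The Jacobian derivation `Δ_h` on `k[x,y]`:
`Δ_h(g) = (∂h/∂x)(∂g/∂y) − (∂h/∂y)(∂g/∂x)`. -/
noncomputable def jacobianDeriv {k : Type*} [CommRing k]
    (h g : MvPolynomial (Fin 2) k) : MvPolynomial (Fin 2) k :=
  pderiv 0 h * pderiv 1 g - pderiv 1 h * pderiv 0 g

/-- `D` is of Jacobian type determined by `h` (in characteristic `p`): `h` is
non-constant, `h ∈ B^D`, `D_1 = Δ_h`, and `ℓ! • D_ℓ = Δ_h^[ℓ]` for `0 ≤ ℓ ≤ p-1`. -/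
def IsJacobianType {k : Type*} [CommRing k] (p : ℕ)
    (hd : HigherDerivation k (MvPolynomial (Fin 2) k))
    (h : MvPolynomial (Fin 2) k) : Prop :=
  (∀ c : k, h ≠ MvPolynomial.C c) ∧ h ∈ hd.kerSet ∧
    (∀ g, hd.D 1 g = jacobianDeriv h g) ∧
    ∀ ℓ : ℕ, ℓ < p → ∀ g, ℓ.factorial • hd.D ℓ g = (jacobianDeriv h)^[ℓ] g

/-- `f` is a variable of `k[x,y]`. -/
def IsVariable {k : Type*} [CommRing k] (f : MvPolynomial (Fin 2) k) : Prop :=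
  ∃ g : MvPolynomial (Fin 2) k,
    AlgebraicIndependent k ![f, g] ∧ Algebra.adjoin k {f, g} = ⊤

/-- The `𝔽₃`-algebra homomorphism `φ : 𝔽₃[x,y] → 𝔽₃[x,y][t]` determined by
`φ(x) = x + t³` and `φ(y) = y + t`. -/
noncomputable def phiEx : MvPolynomial (Fin 2) (ZMod 3) →ₐ[ZMod 3]
    Polynomial (MvPolynomial (Fin 2) (ZMod 3)) :=
  aeval ![Polynomial.C (X 0) + Polynomial.X ^ 3, Polynomial.C (X 1) + Polynomial.X]

/-! The map `φ` is an exponential: in characteristic `3` we have `(s + t)³ = s³ + t³`, so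
substituting `t ↦ s + t` in `φ(g)` agrees with applying `φ` (in the variable `s`) to the
coefficients of `φ(g)`, and comparing coefficients of `sʲ tⁱ` in `φ(g)(s + t)` gives
iterativity. `D₁` is a derivation sending `x ↦ 0`, `y ↦ 1`, hence equals `∂_y`, which is
`Δ_{x - y³}` because `∂_y(y³) = 3y² = 0`; iterativity then gives `ℓ! • D_ℓ = D₁^ℓ`
for all `ℓ`. -/

namespace Polynomial

variable {B : Type*} [CommSemiring B]

theorem aeval_C_X_add_X_eq_taylor (p : B[X]) :
    aeval (C X + X : B[X][X]) p = taylor X (p.map C) := by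
  rw [taylor_apply, comp, eval₂_map, aeval_def, add_comm]
  rfl

theorem hasseDeriv_map_C (k : ℕ) (p : B[X]) :
    hasseDeriv k (p.map (C : B →+* B[X])) = (hasseDeriv k p).map C := by
  ext1 n
  simp [hasseDeriv_coeff, coeff_map]

theorem coeff_coeff_aeval_C_X_add_X (p : B[X]) (i j : ℕ) :
    ((aeval (C X + X : B[X][X]) p).coeff j).coeff i = (i + j).choose j • p.coeff (i + j) := by
  rw [aeval_C_X_add_X_eq_taylor, taylor_coeff, hasseDeriv_map_C, eval_map, eval₂_C_X,
    hasseDeriv_coeff, nsmul_eq_mul]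

end Polynomial

namespace HigherDerivation

open Polynomial

variable {R B : Type*} [CommRing R] [CommRing B] [Algebra R B]

noncomputable def ofAlgHom (φ : B →ₐ[R] B[X]) (hφ : ∀ b, (φ b).coeff 0 = b) :
    HigherDerivation R B where
  D ℓ := ((lcoeff B ℓ).restrictScalars R).comp φ.toLinearMap
  D_zero := LinearMap.ext hφ
  leibniz ℓ a b := by simp [Polynomial.coeff_mul]

variable (φ : B →ₐ[R] B[X]) (hφ : ∀ b, (φ b).coeff 0 = b)

@[simp]
theorem ofAlgHom_D_apply (ℓ : ℕ) (b : B) : (ofAlgHom φ hφ).D ℓ b = (φ b).coeff ℓ := rfl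

theorem locallyFinite_ofAlgHom : (ofAlgHom φ hφ).LocallyFinite := fun b =>
  ⟨(φ b).natDegree + 1, fun _ hℓ => coeff_eq_zero_of_natDegree_lt (Nat.lt_of_succ_le hℓ)⟩

theorem iterative_ofAlgHom
    (hexp : (Polynomial.mapAlgHom φ).comp φ =
      ((Polynomial.aeval (Polynomial.C Polynomial.X + Polynomial.X : B[X][X])).restrictScalars
        R).comp φ) :
    (ofAlgHom φ hφ).Iterative := by
  intro i j b
  have hb : (φ b).map (φ : B →+* B[X]) =
      Polynomial.aeval (Polynomial.C Polynomial.X + Polynomial.X) (φ b) :=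
    DFunLike.congr_fun hexp b
  simp only [ofAlgHom_D_apply]
  rw [← coeff_coeff_aeval_C_X_add_X, ← hb, Polynomial.coeff_map, RingHom.coe_coe]

theorem mem_kerSet_ofAlgHom_iff (b : B) :
    b ∈ (ofAlgHom φ hφ).kerSet ↔ φ b = Polynomial.C b := by
  refine ⟨fun hb => Polynomial.ext fun n => ?_, fun hb ℓ hℓ => ?_⟩
  · rcases n with _ | n
    · simp [hφ]
    · simpa using hb (n + 1) n.succ_pos
  · rw [ofAlgHom_D_apply, hb, Polynomial.coeff_C, if_neg (by omega)]

noncomputable def toDerivation (hd : HigherDerivation R B) : Derivation R B B :=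
  Derivation.mk' (hd.D 1) fun a b => by
    simp [hd.leibniz, Finset.Nat.antidiagonal_succ, hd.D_zero, mul_comm]

@[simp]
theorem toDerivation_apply (hd : HigherDerivation R B) (b : B) : hd.toDerivation b = hd.D 1 b :=
  rfl

theorem Iterative.factorial_smul_D {hd : HigherDerivation R B} (hit : hd.Iterative) (ℓ : ℕ)
    (b : B) : ℓ.factorial • hd.D ℓ b = (hd.D 1)^[ℓ] b := by
  induction ℓ with
  | zero => simp [hd.D_zero]
  | succ ℓ ih =>
    rw [Function.iterate_succ_apply', ← ih, map_nsmul, hit, add_comm 1 ℓ,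
      Nat.choose_succ_self_right, smul_smul, Nat.factorial_succ, mul_comm]

end HigherDerivation

section JacobianType

variable {k : Type*} [CommRing k]

theorem isJacobianType_of_iterative (p : ℕ) {hd : HigherDerivation k (MvPolynomial (Fin 2) k)}
    {h : MvPolynomial (Fin 2) k} (hit : hd.Iterative) (hnc : ∀ c : k, h ≠ C c)
    (hker : h ∈ hd.kerSet) (hD₁ : ∀ g, hd.D 1 g = jacobianDeriv h g) :
    IsJacobianType p hd h := by
  refine ⟨hnc, hker, hD₁, fun ℓ _ g => ?_⟩
  rw [hit.factorial_smul_D, show ⇑(hd.D 1) = jacobianDeriv h from funext hD₁]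

theorem pderiv_zero_X_zero_sub_X_one_pow (n : ℕ) :
    pderiv 0 (X 0 - X 1 ^ n : MvPolynomial (Fin 2) k) = 1 := by
  simp

theorem X_zero_sub_X_one_pow_ne_C [Nontrivial k] (n : ℕ) (c : k) :
    (X 0 - X 1 ^ n : MvPolynomial (Fin 2) k) ≠ C c := fun h => by
  simpa [pderiv_zero_X_zero_sub_X_one_pow] using congrArg (pderiv 0) h

theorem jacobianDeriv_X_zero_sub_X_one_pow (p : ℕ) [CharP k p] (g : MvPolynomial (Fin 2) k) :
    jacobianDeriv (X 0 - X 1 ^ p) g = pderiv 1 g := by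
  simp [jacobianDeriv, pderiv_zero_X_zero_sub_X_one_pow]

end JacobianType

section PhiEx

local notation "𝔹" => MvPolynomial (Fin 2) (ZMod 3)

@[simp]
theorem phiEx_X_zero : phiEx (X 0) = Polynomial.C (X 0) + Polynomial.X ^ 3 := by
  simp [phiEx]

@[simp]
theorem phiEx_X_one : phiEx (X 1) = Polynomial.C (X 1) + Polynomial.X := by
  simp [phiEx]

theorem phiEx_coeff_zero (g : 𝔹) : (phiEx g).coeff 0 = g := by
  have h :
      ((Polynomial.aeval (0 : 𝔹)).restrictScalars (ZMod 3)).comp phiEx = AlgHom.id _ _ := by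
    apply MvPolynomial.algHom_ext
    intro i
    fin_cases i <;> simp
  simpa [Polynomial.coeff_zero_eq_aeval_zero] using DFunLike.congr_fun h g

theorem phiEx_X_zero_sub_X_one_pow :
    phiEx (X 0 - X 1 ^ 3) = Polynomial.C (X 0 - X 1 ^ 3) := by
  rw [map_sub, map_pow, phiEx_X_zero, phiEx_X_one, add_pow_char, map_sub, ← Polynomial.C_pow]
  ring

theorem phiEx_exponential :
    (Polynomial.mapAlgHom phiEx).comp phiEx =
      ((Polynomial.aeval (Polynomial.C Polynomial.X + Polynomial.X :
        Polynomial (Polynomial 𝔹))).restrictScalars (ZMod 3)).comp phiEx := by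
  apply MvPolynomial.algHom_ext
  intro i
  fin_cases i <;> simp [add_assoc, add_pow_char (R := Polynomial (Polynomial 𝔹))]

theorem phiEx_coeff_one (g : 𝔹) : (phiEx g).coeff 1 = pderiv 1 g := by
  have h : (HigherDerivation.ofAlgHom phiEx phiEx_coeff_zero).toDerivation = pderiv 1 :=
    MvPolynomial.derivation_ext fun i => by fin_cases i <;> simp [Polynomial.coeff_X]
  exact DFunLike.congr_fun h g

end PhiEx

/-- Example 2.7. For `φ : 𝔽₃[x,y] → 𝔽₃[x,y][t]` with `φ(x) = x + t³`,
`φ(y) = y + t`, setting `D ℓ g := coeff ℓ (φ g)`: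
(1) the constant coefficient of `φ(g)` is `g`; (2) `φ(x − y³) = x − y³`;
(3) `D` is locally finite and iterative; (4) `D 1 = ∂_y = Δ_{x−y³}` and
`2! • D 2 = D 1 ∘ D 1`. Hence there is an lfihd on `𝔽₃[x,y]` with `D ℓ = coeff ℓ ∘ φ`
which is of Jacobian type determined by `x − y³`. -/
theorem stmt7 :
    (∀ g : MvPolynomial (Fin 2) (ZMod 3), (phiEx g).coeff 0 = g) ∧
    (phiEx (X 0 - X 1 ^ 3) = Polynomial.C (X 0 - X 1 ^ 3)) ∧
    (∀ g : MvPolynomial (Fin 2) (ZMod 3),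
        ∃ N : ℕ, ∀ ℓ : ℕ, N ≤ ℓ → (phiEx g).coeff ℓ = 0) ∧
    (∀ (i j : ℕ) (g : MvPolynomial (Fin 2) (ZMod 3)),
        (phiEx ((phiEx g).coeff j)).coeff i = (i + j).choose j • (phiEx g).coeff (i + j)) ∧
    (∀ g : MvPolynomial (Fin 2) (ZMod 3),
        (phiEx g).coeff 1 = pderiv 1 g ∧ (phiEx g).coeff 1 = jacobianDeriv (X 0 - X 1 ^ 3) g) ∧
    (∀ g : MvPolynomial (Fin 2) (ZMod 3),
        (Nat.factorial 2) • (phiEx g).coeff 2 = (phiEx ((phiEx g).coeff 1)).coeff 1) ∧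
    (∃ hd : HigherDerivation (ZMod 3) (MvPolynomial (Fin 2) (ZMod 3)),
        (∀ (ℓ : ℕ) (g : MvPolynomial (Fin 2) (ZMod 3)), hd.D ℓ g = (phiEx g).coeff ℓ) ∧
        hd.LocallyFinite ∧ hd.Iterative ∧ IsJacobianType 3 hd (X 0 - X 1 ^ 3)) := by
  set hd := HigherDerivation.ofAlgHom phiEx phiEx_coeff_zero
  have hlf : hd.LocallyFinite := HigherDerivation.locallyFinite_ofAlgHom _ _
  have hit : hd.Iterative := HigherDerivation.iterative_ofAlgHom _ _ phiEx_exponential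
  have hD₁ (g) : (phiEx g).coeff 1 = jacobianDeriv (X 0 - X 1 ^ 3) g := by
    rw [phiEx_coeff_one, jacobianDeriv_X_zero_sub_X_one_pow]
  refine ⟨phiEx_coeff_zero, phiEx_X_zero_sub_X_one_pow, hlf, hit, fun g => ⟨phiEx_coeff_one g,
    hD₁ g⟩, fun g => (hit 1 1 g).symm, hd, fun _ _ => rfl, hlf, hit, ?_⟩
  refine isJacobianType_of_iterative 3 hit (X_zero_sub_X_one_pow_ne_C 3) ?_ hD₁
  exact (HigherDerivation.mem_kerSet_ofAlgHom_iff _ _ _).2 phiEx_X_zero_sub_X_one_pow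
end

section
/- Let R be an integral domain of characteristic p > 0, let B = R[x_1,…,x_n] be the polynomial ring in n variables over R, and let F = (f_1,…,f_{n-1}) ∈ B^{n-1}. If there exists a locally finite iterative higher R-derivation (lfihd) D on B of Jacobian type determined by F such that B^D = R[f_1,…,f_{n-1}] and D has a slice, then F is extendable. -/
open MvPolynomial

/-- The Jacobian derivation `Δ_F` on `R[x_0, …, x_n]` determined by the `n`-tuple
`F = (f 0, …, f (n-1))`: `Δ_F(g)` is the determinant of the `(n+1) × (n+1)` matrix
whose first `n` rows are the partials of the `f i` and last row the partials of `g`. -/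
noncomputable def jacobianDerivF {R : Type*} [CommRing R] {n : ℕ}
    (f : Fin n → MvPolynomial (Fin (n + 1)) R) (g : MvPolynomial (Fin (n + 1)) R) :
    MvPolynomial (Fin (n + 1)) R :=
  Matrix.det (Matrix.of fun i j : Fin (n + 1) =>
    Fin.lastCases (pderiv j g) (fun i' : Fin n => pderiv j (f i')) i)

/-- `D` is of Jacobian type determined by `F = (f 0, …, f (n-1))` (in characteristic
`p`): the `f i` are algebraically independent over `R`, `f i ∈ B^D`, `D_1 = Δ_F`, and
`ℓ! • D_ℓ = Δ_F^[ℓ]` for `0 ≤ ℓ ≤ p-1`. -/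
def IsJacobianTypeF {R : Type*} [CommRing R] {n : ℕ} (p : ℕ)
    (hd : HigherDerivation R (MvPolynomial (Fin (n + 1)) R))
    (f : Fin n → MvPolynomial (Fin (n + 1)) R) : Prop :=
  AlgebraicIndependent R f ∧ (∀ i, f i ∈ hd.kerSet) ∧
    (∀ g, hd.D 1 g = jacobianDerivF f g) ∧
    ∀ ℓ : ℕ, ℓ < p → ∀ g, ℓ.factorial • hd.D ℓ g = (jacobianDerivF f)^[ℓ] g

/-- `F = (f 0, …, f (n-1))` is extendable: there is `s` such that
`f 0, …, f (n-1), s` are algebraically independent over `R` and generate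
`R[x_0, …, x_n]` as an `R`-algebra. -/
def Extendable {R : Type*} [CommRing R] {n : ℕ}
    (f : Fin n → MvPolynomial (Fin (n + 1)) R) : Prop :=
  ∃ s : MvPolynomial (Fin (n + 1)) R,
    AlgebraicIndependent R (Fin.snoc f s) ∧
      Algebra.adjoin R (Set.range (Fin.snoc f s)) = ⊤

universe u

/-! Write `u = D_N(s)` for the unit leading coefficient of the slice `s`. By iterativity
`D_{m-i}(D_i b) = C(m,i) D_m b` for `b` of `t`-degree `m`, so minimality of `N` forces
`C(N,i) = 0` in `B` for `0 < i < N`, i.e. `(1 + X)^N = 1 + X^N`; comparing coefficients of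
`(1 + X)^m` then shows that `N` divides the `t`-degree of every element. Hence
`b - D_m(b) u^{-k} s^k` with `m = kN` has smaller `t`-degree, so by induction `B` is generated
by `B^D = R[F]` and `s`; looking at `D_{KN}` of a relation of degree `K` in `s` shows that `s`
is transcendental over `B^D`. -/

open Polynomial in
theorem Nat.cast_choose_mul_add_eq_one {S : Type*} [CommRing S] {N : ℕ}
    (hN : ∀ i, 0 < i → i < N → (N.choose i : S) = 0) (q : ℕ) {r : ℕ} (hr : r < N) :
    ((N * q + r).choose r : S) = 1 := by
  have hfrob : (Polynomial.X + 1 : S[X]) ^ N = Polynomial.X ^ N + 1 := by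
    ext k
    rw [coeff_X_add_one_pow, Polynomial.coeff_add, Polynomial.coeff_X_pow, Polynomial.coeff_one]
    have hN0 : 0 ≠ N := by omega
    rcases lt_trichotomy k N with hk | rfl | hk
    · rcases Nat.eq_zero_or_pos k with rfl | hk0
      · simp [hN0]
      · simp [hN k hk0 hk, hk.ne, hk0.ne']
    · simp [hN0.symm]
    · simp [Nat.choose_eq_zero_of_lt hk, hk.ne', show k ≠ 0 by omega]
  obtain ⟨g, hg⟩ := sub_dvd_pow_sub_pow (Polynomial.X ^ N + 1 : S[X]) 1 q
  have hexpand : (Polynomial.X + 1 : S[X]) ^ (N * q + r) =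
      (Polynomial.X + 1) ^ r + Polynomial.X ^ N * (g * (Polynomial.X + 1) ^ r) := by
    rw [pow_add, pow_mul, hfrob]
    linear_combination (Polynomial.X + 1 : S[X]) ^ r * hg
  have := congrArg (Polynomial.coeff · r) hexpand
  simpa [coeff_X_add_one_pow, coeff_X_pow_mul', hr.not_ge] using this

theorem algebraicIndependent_finSnoc {R A : Type*} [CommRing R] [CommRing A] [Algebra R A]
    {n : ℕ} {x : Fin n → A} {a : A} :
    AlgebraicIndependent R (Fin.snoc x a : Fin (n + 1) → A) ↔
      AlgebraicIndependent R x ∧ Transcendental (Algebra.adjoin R (Set.range x)) a := by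
  rw [← AlgebraicIndependent.option_iff]
  refine (algebraicIndependent_equiv' finSuccEquivLast.symm (funext fun o => ?_)).symm
  cases o <;> simp

namespace HigherDerivation

variable {R B : Type*} [CommRing R] [CommRing B] [Algebra R B] (hd : HigherDerivation R B)

/-- `deg_t φ_D(b) ≤ m`. -/
def DegLE (b : B) (m : ℕ) : Prop :=
  ∀ ℓ, m < ℓ → hd.D ℓ b = 0

/-- Every element outside `B^D` has `t`-degree at least `N`. -/
def DegLowerBound (N : ℕ) : Prop :=
  ∀ b : B, b ∉ hd.kerSet → ∃ m : ℕ, N ≤ m ∧ hd.D m b ≠ 0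

variable {hd}

theorem D_zero_apply (b : B) : hd.D 0 b = b := by
  rw [hd.D_zero, LinearMap.id_apply]

theorem degLE_zero_iff {b : B} : hd.DegLE b 0 ↔ b ∈ hd.kerSet := Iff.rfl

theorem D_one_eq_zero {ℓ : ℕ} (hℓ : 1 ≤ ℓ) : hd.D ℓ (1 : B) = 0 := by
  induction ℓ using Nat.strong_induction_on with
  | _ ℓ ih =>
    have h := hd.leibniz ℓ 1 1
    rw [Finset.sum_eq_add_of_mem (0, ℓ) (ℓ, 0) (by simp) (by simp) (by simp; omega)] at h
    · simpa [D_zero_apply] using h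
    · rintro ⟨i, j⟩ hij ⟨h0, hℓ'⟩
      rw [Finset.HasAntidiagonal.mem_antidiagonal] at hij
      simp only [Ne, Prod.mk.injEq] at h0 hℓ'
      rw [ih i (by omega) (by omega), zero_mul]

theorem D_mul_of_mem_kerSet {c : B} (hc : c ∈ hd.kerSet) (x : B) (ℓ : ℕ) :
    hd.D ℓ (c * x) = c * hd.D ℓ x := by
  rw [hd.leibniz, Finset.sum_eq_single_of_mem (0, ℓ) (by simp), D_zero_apply]
  rintro ⟨i, j⟩ hij hne
  rw [Finset.HasAntidiagonal.mem_antidiagonal] at hij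
  simp only [Ne, Prod.mk.injEq] at hne
  rw [hc i (by omega), zero_mul]

theorem mul_mem_kerSet {c c' : B} (hc : c ∈ hd.kerSet) (hc' : c' ∈ hd.kerSet) :
    c * c' ∈ hd.kerSet := fun ℓ hℓ => by
  rw [D_mul_of_mem_kerSet hc, hc' ℓ hℓ, mul_zero]

theorem pow_mem_kerSet {c : B} (hc : c ∈ hd.kerSet) (k : ℕ) : c ^ k ∈ hd.kerSet := by
  induction k with
  | zero => exact fun ℓ hℓ => by rw [pow_zero, D_one_eq_zero hℓ]
  | succ k ih => exact pow_succ c k ▸ mul_mem_kerSet ih hc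

theorem mem_kerSet_of_mul_eq_one {u v : B} (hu : u ∈ hd.kerSet) (hvu : v * u = 1) :
    v ∈ hd.kerSet := fun ℓ hℓ => by
  have h := D_mul_of_mem_kerSet hu v ℓ
  rw [mul_comm, hvu, D_one_eq_zero hℓ] at h
  rw [← one_mul (hd.D ℓ v), ← hvu, mul_assoc, ← h, mul_zero]

theorem DegLE.sub {a b : B} {m : ℕ} (ha : hd.DegLE a m) (hb : hd.DegLE b m) :
    hd.DegLE (a - b) m := fun ℓ hℓ => by
  rw [map_sub, ha ℓ hℓ, hb ℓ hℓ, sub_zero]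

theorem DegLE.mul {a b : B} {m n : ℕ} (ha : hd.DegLE a m) (hb : hd.DegLE b n) :
    hd.DegLE (a * b) (m + n) := fun ℓ hℓ => by
  rw [hd.leibniz]
  refine Finset.sum_eq_zero fun ⟨i, j⟩ hij => ?_
  rw [Finset.HasAntidiagonal.mem_antidiagonal] at hij
  rcases lt_or_ge m i with hi | hi
  · rw [ha i hi, zero_mul]
  · rw [hb j (by omega), mul_zero]

theorem D_add_mul_of_degLE {a b : B} {m n : ℕ} (ha : hd.DegLE a m) (hb : hd.DegLE b n) :
    hd.D (m + n) (a * b) = hd.D m a * hd.D n b := by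
  rw [hd.leibniz, Finset.sum_eq_single_of_mem (m, n) (by simp)]
  rintro ⟨i, j⟩ hij hne
  rw [Finset.HasAntidiagonal.mem_antidiagonal] at hij
  simp only [Ne, Prod.mk.injEq] at hne
  rcases lt_or_ge m i with hi | hi
  · rw [ha i hi, zero_mul]
  · rw [hb j (by omega), mul_zero]

theorem DegLE.pow {s : B} {N : ℕ} (hs : hd.DegLE s N) (k : ℕ) : hd.DegLE (s ^ k) (N * k) := by
  induction k with
  | zero => exact fun ℓ hℓ => by rw [pow_zero, D_one_eq_zero hℓ]
  | succ k ih => exact pow_succ s k ▸ ih.mul hs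

theorem D_mul_pow_of_degLE {s : B} {N : ℕ} (hs : hd.DegLE s N) (k : ℕ) :
    hd.D (N * k) (s ^ k) = hd.D N s ^ k := by
  induction k with
  | zero => rw [pow_zero, pow_zero, mul_zero, D_zero_apply]
  | succ k ih => rw [pow_succ, pow_succ, Nat.mul_succ, D_add_mul_of_degLE (hs.pow k) hs, ih]

theorem degLE_of_D_eq_zero {b : B} {m : ℕ} (hb : hd.DegLE b (m + 1)) (h0 : hd.D (m + 1) b = 0) :
    hd.DegLE b m := fun ℓ hℓ => by
  rcases (Nat.succ_le_of_lt hℓ).eq_or_lt with rfl | hlt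
  · exact h0
  · exact hb ℓ hlt

theorem D_mem_kerSet_of_degLE (hIt : hd.Iterative) {b : B} {m : ℕ} (hb : hd.DegLE b m) :
    hd.D m b ∈ hd.kerSet := fun i _ => by
  rw [hIt, hb (i + m) (by omega), smul_zero]

theorem DegLE.D (hIt : hd.Iterative) {b : B} {m : ℕ} (hb : hd.DegLE b m) (i : ℕ) :
    hd.DegLE (hd.D i b) (m - i) := fun ℓ hℓ => by
  rw [hIt, hb (ℓ + i) (by omega), smul_zero]

theorem DegLowerBound.le {N : ℕ} (hmin : hd.DegLowerBound N) {b : B} {m : ℕ}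
    (hb : b ∉ hd.kerSet) (hbm : hd.DegLE b m) : N ≤ m := by
  obtain ⟨m', hm', hne⟩ := hmin b hb
  by_contra! h
  exact hne (hbm m' (by omega))

theorem le_sub_of_choose_smul_ne_zero (hIt : hd.Iterative) {N : ℕ} (hmin : hd.DegLowerBound N)
    {b : B} {m i : ℕ} (hbm : hd.DegLE b m) (hi : i < m) (hne : m.choose i • hd.D m b ≠ 0) :
    N ≤ m - i := by
  refine hmin.le (fun hker => hne ?_) (hbm.D hIt i)
  have h := hIt (m - i) i b
  rw [Nat.sub_add_cancel hi.le] at h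
  exact h ▸ hker _ (by omega)

theorem cast_choose_eq_zero_of_isUnit (hIt : hd.Iterative) {N : ℕ} (hmin : hd.DegLowerBound N)
    {s : B} (hs : hd.DegLE s N) (hu : IsUnit (hd.D N s)) {i : ℕ} (hi0 : 0 < i) (hiN : i < N) :
    (N.choose i : B) = 0 := by
  by_contra hne
  have := le_sub_of_choose_smul_ne_zero hIt hmin hs hiN
    (by rwa [nsmul_eq_mul, Ne, hu.mul_left_eq_zero])
  omega

theorem dvd_of_D_ne_zero (hIt : hd.Iterative) {N : ℕ} (hmin : hd.DegLowerBound N)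
    {s : B} (hs : hd.DegLE s N) (hu : IsUnit (hd.D N s)) (hN : 0 < N)
    {b : B} {m : ℕ} (hbm : hd.DegLE b m) (hb : hd.D m b ≠ 0) : N ∣ m := by
  by_contra hdvd
  have hr0 : 0 < m % N := Nat.pos_of_ne_zero fun h => hdvd (Nat.dvd_of_mod_eq_zero h)
  have hrN : m % N < N := Nat.mod_lt m hN
  have hm : N * (m / N) + m % N = m := Nat.div_add_mod m N
  have hchoose : (m.choose (N * (m / N)) : B) = 1 := by
    have := Nat.cast_choose_mul_add_eq_one
      (fun i hi0 hiN => cast_choose_eq_zero_of_isUnit hIt hmin hs hu hi0 hiN) (m / N) hrN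
    rwa [← Nat.choose_symm_add, hm] at this
  have := le_sub_of_choose_smul_ne_zero hIt hmin hbm (i := N * (m / N)) (by omega)
    (by rwa [nsmul_eq_mul, hchoose, one_mul])
  omega

theorem mem_subalgebra_of_degLE (hIt : hd.Iterative) {N : ℕ} (hmin : hd.DegLowerBound N)
    {s : B} (hs : hd.DegLE s N) (hu : IsUnit (hd.D N s)) (hN : 0 < N)
    {T : Subalgebra R B} (hkerT : hd.kerSet ⊆ T) (hsT : s ∈ T) {b : B} {m : ℕ}
    (hb : hd.DegLE b m) : b ∈ T := by
  induction m generalizing b with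
  | zero => exact hkerT (degLE_zero_iff.mp hb)
  | succ m ih =>
    by_cases h0 : hd.D (m + 1) b = 0
    · exact ih (degLE_of_D_eq_zero hb h0)
    obtain ⟨k, hk⟩ := dvd_of_D_ne_zero hIt hmin hs hu hN hb h0
    obtain ⟨v, hvu⟩ := hu.exists_left_inv
    set c := hd.D (m + 1) b * v ^ k
    have hc : c ∈ hd.kerSet := mul_mem_kerSet (D_mem_kerSet_of_degLE hIt hb)
      (pow_mem_kerSet (mem_kerSet_of_mul_eq_one (D_mem_kerSet_of_degLE hIt hs) hvu) k)
    have hcs : hd.DegLE (c * s ^ k) (m + 1) := by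
      simpa [hk] using (degLE_zero_iff.mpr hc).mul (hs.pow k)
    have hlead : hd.D (m + 1) (c * s ^ k) = hd.D (m + 1) b := by
      rw [D_mul_of_mem_kerSet hc, hk, D_mul_pow_of_degLE hs, ← hk, mul_assoc, ← mul_pow, hvu,
        one_pow, mul_one]
    have hrest : b - c * s ^ k ∈ T :=
      ih (degLE_of_D_eq_zero (hb.sub hcs) (by rw [map_sub, hlead, sub_self]))
    simpa using T.add_mem hrest (T.mul_mem (hkerT hc) (T.pow_mem hsT k))

open Polynomial in
theorem transcendental_of_degLE {A : Subalgebra R B} (hA : (A : Set B) ⊆ hd.kerSet)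
    {s : B} {N : ℕ} (hN : 0 < N) (hs : hd.DegLE s N) (hu : IsUnit (hd.D N s)) :
    Transcendental A s := by
  rintro ⟨P, hP, hPs⟩
  have hcoeff (j : ℕ) : algebraMap A B (P.coeff j) ∈ hd.kerSet := hA (P.coeff j).2
  have hlead : hd.D (N * P.natDegree) (aeval s P) = P.leadingCoeff * hd.D N s ^ P.natDegree := by
    rw [aeval_eq_sum_range, map_sum,
      Finset.sum_eq_single_of_mem P.natDegree (Finset.self_mem_range_succ _)]
    · rw [Algebra.smul_def, D_mul_of_mem_kerSet (hcoeff _), D_mul_pow_of_degLE hs]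
      rfl
    · intro j hj hne
      have hjK : j < P.natDegree := by
        rw [Finset.mem_range] at hj
        omega
      rw [Algebra.smul_def, D_mul_of_mem_kerSet (hcoeff _),
        hs.pow j _ (Nat.mul_lt_mul_of_pos_left hjK hN), mul_zero]
  rw [hPs, map_zero, eq_comm, (hu.pow _).mul_left_eq_zero] at hlead
  exact hP (leadingCoeff_eq_zero.mp (Subtype.ext hlead))

end HigherDerivation

theorem stmt10_general {R : Type u} [CommRing R] (p : ℕ)
    {n : ℕ} (f : Fin n → MvPolynomial (Fin (n + 1)) R)
    (h : ∃ hd : HigherDerivation R (MvPolynomial (Fin (n + 1)) R),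
      hd.LocallyFinite ∧ hd.Iterative ∧ IsJacobianTypeF p hd f ∧
      hd.kerSet = ↑(Algebra.adjoin R (Set.range f)) ∧
      ∃ s : MvPolynomial (Fin (n + 1)) R, hd.IsSlice s) :
    Extendable f := by
  obtain ⟨hd, hLF, hIt, hJac, hker, s, N, hN, -, hs, hu, hmin⟩ := h
  have hf_sub : Set.range f ⊆ Set.range (Fin.snoc f s : Fin (n + 1) → _) :=
    Set.range_subset_iff.mpr fun i => ⟨i.castSucc, Fin.snoc_castSucc ..⟩
  have hs_mem : s ∈ Set.range (Fin.snoc f s : Fin (n + 1) → _) :=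
    ⟨Fin.last n, Fin.snoc_last ..⟩
  refine ⟨s, algebraicIndependent_finSnoc.mpr ⟨hJac.1, ?_⟩, ?_⟩
  · exact HigherDerivation.transcendental_of_degLE hker.ge hN hs hu
  · refine eq_top_iff.mpr fun b _ => ?_
    obtain ⟨M, hM⟩ := hLF b
    exact HigherDerivation.mem_subalgebra_of_degLE hIt hmin hs hu hN
      (hker ▸ Algebra.adjoin_mono hf_sub) (Algebra.subset_adjoin hs_mem)
      fun ℓ hℓ => hM ℓ hℓ.le

/-- Theorem 2.8, (ii) ⟹ (i). Let `R` be an integral domain of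
characteristic `p > 0`, `B = R[x_0, …, x_n]`, and `F = (f 0, …, f (n-1)) ∈ Bⁿ`.
If there exists a locally finite iterative higher `R`-derivation `D` on `B` of
Jacobian type determined by `F` with `B^D = R[f 0, …, f (n-1)]` that has a slice,
then `F` is extendable. -/
theorem stmt10 {R : Type u} [CommRing R] [IsDomain R] (p : ℕ) (hp : 0 < p) [CharP R p]
    {n : ℕ} (f : Fin n → MvPolynomial (Fin (n + 1)) R)
    (h : ∃ hd : HigherDerivation R (MvPolynomial (Fin (n + 1)) R),
      hd.LocallyFinite ∧ hd.Iterative ∧ IsJacobianTypeF p hd f ∧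
      hd.kerSet = ↑(Algebra.adjoin R (Set.range f)) ∧
      ∃ s : MvPolynomial (Fin (n + 1)) R, hd.IsSlice s) :
    Extendable f :=
  stmt10_general p f h
end
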